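/- arXiv:1110.6585 — 5 statements merged into one kernel-verified Lean document; each statement's English description precedes it below -/
import Mathlib

section
/- Let Γ be an abelian group, E a Γ-graded division ring, δ̄ = (δ₁,…,δₙ) ∈ Γⁿ, and S = Mₙ(E)(δ̄). Then every homogeneous unit A ∈ S_h* has a unique strict Bruhat normal form A = T·U·P_π·V. Moreover, in this decomposition T, U·P_π, and V are homogeneous matrices with deg(T) = deg(V) = 0 and deg(U·P_π) = deg(A), and T is a product of homogeneous elementary matrices (all of degree 0). -/
/-- The degree-`lam` homogeneous component of the matrix ring `Mₙ(E)(δ̄)` over a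
`Γ`-graded ring `E`, with the grading shifted by `δ̄`: a matrix lies in it iff its
`(i,j)`-entry lies in `E_{lam + δⱼ - δᵢ}` for all `i, j`. -/
def MatrixGrade {Γ E : Type*} [AddCommGroup Γ] [Ring E] (𝒜 : Γ → AddSubgroup E)
    {ι : Type*} (δ : ι → Γ) (lam : Γ) : Set (Matrix ι ι E) :=
  {A | ∀ i j, A i j ∈ 𝒜 (lam + δ j - δ i)}

/-- A matrix is unipotent lower triangular if all entries above the diagonal vanish and
all diagonal entries equal `1`. -/
def UnipotentLower {R : Type*} [Zero R] [One R] {n : ℕ}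
    (T : Matrix (Fin n) (Fin n) R) : Prop :=
  (∀ i j : Fin n, i < j → T i j = 0) ∧ ∀ i, T i i = 1

/-- A matrix is unipotent upper triangular if all entries below the diagonal vanish and
all diagonal entries equal `1`. -/
def UnipotentUpper {R : Type*} [Zero R] [One R] {n : ℕ}
    (V : Matrix (Fin n) (Fin n) R) : Prop :=
  (∀ i j : Fin n, j < i → V i j = 0) ∧ ∀ i, V i i = 1

/-!
Gaussian elimination that only adds multiples of a row to the rows below it. Treat the rows in
order: the first nonzero entry of row `k` is homogeneous, hence a unit, and subtracting suitable
multiples of row `k` from the later rows clears its column there; these row operations are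
products of degree-zero elementary matrices. The result `B` has its pivots in distinct columns
`π k`, and `B = U P_π V` with `U` the diagonal of pivots and `V` upper unipotent; that the column
of each pivot vanishes below it is exactly the strictness condition on `V`.

Uniqueness goes row by row: if `T B = T' B'` with `B`, `B'` of this shape and the earlier rows
agree, evaluating row `i` at the pivot columns of the earlier rows gives a triangular system that
forces rows `i` of `T` and `T'`, hence of `B` and `B'`, to agree.
-/

section

open Matrix Finset

variable {Γ E : Type*} [AddCommGroup Γ] [Ring E]

section Grading

variable {𝒜 : Γ → AddSubgroup E}

theorem SetLike.inverse_mem_graded [DecidableEq Γ] [GradedRing 𝒜] {x : E} {γ : Γ}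
    (hx : x ∈ 𝒜 γ) (hu : IsUnit x) : Ring.inverse x ∈ 𝒜 (-γ) := by
  -- the degree `-γ` component of the inverse is already a right inverse of `x`
  have hproj : x * (DirectSum.decompose 𝒜 (Ring.inverse x) (-γ) : E) = 1 := by
    rw [← DirectSum.coe_decompose_mul_add_of_left_mem 𝒜 hx, Ring.mul_inverse_cancel x hu,
      add_neg_cancel, DirectSum.decompose_of_mem_same 𝒜 SetLike.GradedOne.one_mem]
  rw [← hu.mul_left_cancel (hproj.trans (Ring.mul_inverse_cancel x hu).symm)]
  exact SetLike.coe_mem _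

variable [SetLike.GradedMonoid 𝒜] {ι : Type*} {δ : ι → Γ}

theorem MatrixGrade.mul_mem [Fintype ι] {A B : Matrix ι ι E} {a b : Γ}
    (hA : A ∈ MatrixGrade 𝒜 δ a) (hB : B ∈ MatrixGrade 𝒜 δ b) :
    A * B ∈ MatrixGrade 𝒜 δ (a + b) := fun i j =>
  AddSubgroup.sum_mem _ fun k _ => by
    convert SetLike.mul_mem_graded (hA i k) (hB k j) using 2
    abel

theorem MatrixGrade.one_mem [DecidableEq ι] : (1 : Matrix ι ι E) ∈ MatrixGrade 𝒜 δ 0 := by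
  intro i j
  rcases eq_or_ne i j with rfl | h
  · simpa using SetLike.GradedOne.one_mem
  · simp [one_apply_ne h]

variable (𝒜 δ) in
def homogeneousElementary [DecidableEq ι] : Set (Matrix ι ι E) :=
  {e | ∃ (i j : ι) (x : E), i ≠ j ∧ x ∈ 𝒜 (δ j - δ i) ∧ e = 1 + Matrix.single i j x}

theorem closure_homogeneousElementary_subset [Fintype ι] [DecidableEq ι] :
    (Submonoid.closure (homogeneousElementary 𝒜 δ) : Set (Matrix ι ι E)) ⊆
      MatrixGrade 𝒜 δ 0 := by
  intro T hT
  induction hT using Submonoid.closure_induction with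
  | mem e he =>
    obtain ⟨i, j, x, -, hx, rfl⟩ := he
    intro a b
    refine add_mem (MatrixGrade.one_mem a b) ?_
    by_cases h : i = a ∧ j = b
    · obtain ⟨rfl, rfl⟩ := h
      simpa using hx
    · simp [h]
  | one => exact MatrixGrade.one_mem
  | mul x y _ _ hx hy => simpa using MatrixGrade.mul_mem hx hy

end Grading

section ColumnOperation

variable {ι : Type*} [Fintype ι] [DecidableEq ι]

theorem sum_single_mul_apply (s : Finset ι) (k : ι) (c : ι → E) (B : Matrix ι ι E) (i j : ι) :
    ((∑ i ∈ s, single i k (c i)) * B) i j = if i ∈ s then c i * B k j else 0 := by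
  rw [Finset.sum_mul, Matrix.sum_apply]
  split_ifs with h
  · rw [Finset.sum_eq_single_of_mem i h fun i' _ hi' => single_mul_apply_of_ne _ _ _ _ _ hi'.symm _,
      single_mul_apply_same]
  · refine Finset.sum_eq_zero fun i' hi' => single_mul_apply_of_ne _ _ _ _ _ ?_ _
    rintro rfl
    exact h hi'

theorem sum_single_mul_sum_single {s : Finset ι} {k : ι} (hk : k ∉ s) (c d : ι → E) :
    (∑ i ∈ s, single i k (c i)) * (∑ i ∈ s, single i k (d i)) = 0 := by
  rw [Finset.sum_mul_sum]
  refine Finset.sum_eq_zero fun _ _ => Finset.sum_eq_zero fun i hi => ?_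
  exact single_mul_single_of_ne _ _ _ _ (ne_of_mem_of_not_mem hi hk).symm _

theorem one_add_sum_single_mem_closure {𝒜 : Γ → AddSubgroup E} {δ : ι → Γ} {s : Finset ι}
    {k : ι} (hk : k ∉ s) {c : ι → E} (hc : ∀ i ∈ s, c i ∈ 𝒜 (δ k - δ i)) :
    1 + ∑ i ∈ s, single i k (c i) ∈ Submonoid.closure (homogeneousElementary 𝒜 δ) := by
  induction s using Finset.induction_on with
  | empty => simp [one_mem]
  | insert a s ha ih =>
    have hks : k ∉ s := fun h => hk (mem_insert_of_mem h)
    have hfac : 1 + ∑ i ∈ insert a s, single i k (c i) =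
        (1 + single a k (c a)) * (1 + ∑ i ∈ s, single i k (c i)) := by
      have hzero : single a k (c a) * ∑ i ∈ s, single i k (c i) = 0 := by
        rw [Finset.mul_sum]
        refine Finset.sum_eq_zero fun i hi => ?_
        exact single_mul_single_of_ne _ _ _ _ (ne_of_mem_of_not_mem hi hks).symm _
      rw [sum_insert ha, add_mul, one_mul, mul_add, mul_one, hzero]
      abel
    rw [hfac]
    exact mul_mem (Submonoid.subset_closure ⟨a, k, c a, fun he => hk (he ▸ mem_insert_self a s),
      hc a (mem_insert_self a s), rfl⟩) (ih hks fun i hi => hc i (mem_insert_of_mem hi))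

end ColumnOperation

section Triangular

variable {n : ℕ}

theorem unipotentLower_one : UnipotentLower (1 : Matrix (Fin n) (Fin n) E) :=
  ⟨fun _ _ h => one_apply_ne h.ne, fun _ => one_apply_eq _⟩

theorem UnipotentLower.mul {T T' : Matrix (Fin n) (Fin n) E} (hT : UnipotentLower T)
    (hT' : UnipotentLower T') : UnipotentLower (T * T') := by
  refine ⟨fun i j hij => ?_, fun i => ?_⟩
  · rw [Matrix.mul_apply]
    refine Finset.sum_eq_zero fun k _ => ?_
    rcases lt_or_ge i k with h | h
    · rw [hT.1 i k h, zero_mul]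
    · rw [hT'.1 k j (h.trans_lt hij), mul_zero]
  · rw [mul_apply, Finset.sum_eq_single i (fun k _ hk => ?_) (by simp), hT.2, hT'.2, one_mul]
    rcases hk.lt_or_gt with h | h
    · rw [hT'.1 k i h, mul_zero]
    · rw [hT.1 i k h, zero_mul]

theorem UnipotentLower.mul_apply {T : Matrix (Fin n) (Fin n) E} (hT : UnipotentLower T)
    (B : Matrix (Fin n) (Fin n) E) (i c : Fin n) :
    (T * B) i c = B i c + ∑ k ∈ Iio i, T i k * B k c := by
  rw [Matrix.mul_apply, ← Finset.sum_subset (subset_univ (Iic i)) fun k _ hk => ?_,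
    ← Iio_insert, sum_insert notMem_Iio_self, hT.2, one_mul]
  rw [hT.1 i k (not_le.mp (by simpa using hk)), zero_mul]

theorem UnipotentLower.sub_apply_eq_sum {T T' B B' : Matrix (Fin n) (Fin n) E} {i : Fin n}
    (hT : UnipotentLower T) (hT' : UnipotentLower T') (hB : ∀ k < i, B k = B' k)
    (h : ∀ c, (T * B) i c = (T' * B') i c) (c : Fin n) :
    B i c - B' i c = ∑ k ∈ Iio i, (T' i k - T i k) * B k c := by
  have hc := h c
  have hsum : ∑ k ∈ Iio i, T' i k * B' k c = ∑ k ∈ Iio i, T' i k * B k c :=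
    Finset.sum_congr rfl fun k hk => by rw [hB k (mem_Iio.mp hk)]
  rw [hT.mul_apply, hT'.mul_apply, hsum] at hc
  simp only [sub_mul, sum_sub_distrib]
  rw [sub_eq_sub_iff_add_eq_add, hc, add_comm]

theorem unipotentLower_one_add_sum_single {s : Finset (Fin n)} {k : Fin n}
    (hs : ∀ i ∈ s, k < i) (c : Fin n → E) :
    UnipotentLower (1 + ∑ i ∈ s, single i k (c i)) := by
  have hN : ∀ i j, (∑ i ∈ s, single i k (c i)) i j =
      if i ∈ s then c i * (1 : Matrix _ _ E) k j else 0 := fun i j => by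
    rw [← sum_single_mul_apply, mul_one]
  refine ⟨fun i j hij => ?_, fun i => ?_⟩
  · rw [Matrix.add_apply, one_apply_ne hij.ne, hN]
    split_ifs with hi
    · rw [one_apply_ne ((hs i hi).trans hij).ne, mul_zero, add_zero]
    · rw [add_zero]
  · rw [Matrix.add_apply, one_apply_eq, hN]
    split_ifs with hi
    · rw [one_apply_ne (hs i hi).ne, mul_zero, add_zero]
    · rw [add_zero]

end Triangular

section Permutation

variable {ι : Type*} [Fintype ι] [DecidableEq ι]

theorem Matrix.IsDiag.isUnit_apply {U : Matrix ι ι E} (hU : U.IsDiag) (hUu : IsUnit U) (i : ι) :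
    IsUnit (U i i) := by
  obtain ⟨C, h1, h2⟩ := isUnit_iff_exists.mp hUu
  rw [← hU.diagonal_diag] at h1 h2
  exact isUnit_iff_exists.mpr
    ⟨C i i, by simpa using congrFun₂ h1 i i, by simpa using congrFun₂ h2 i i⟩

theorem Matrix.IsDiag.mul_permMatrix_apply {U : Matrix ι ι E} (hU : U.IsDiag)
    (σ : Equiv.Perm ι) (i j : ι) : (U * σ.permMatrix E) i j = if σ i = j then U i i else 0 := by
  rw [PEquiv.mul_toMatrix_toPEquiv, submatrix_apply, id]
  split_ifs with h
  · rw [← h, Equiv.symm_apply_apply]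
  · exact hU fun he => h (by rw [he, Equiv.apply_symm_apply])

theorem Matrix.IsDiag.mul_permMatrix_mul_apply {U : Matrix ι ι E} (hU : U.IsDiag)
    (σ : Equiv.Perm ι) (V : Matrix ι ι E) (i j : ι) :
    (U * σ.permMatrix E * V) i j = U i i * V (σ i) j := by
  rw [← hU.diagonal_diag, mul_assoc, diagonal_mul, PEquiv.toMatrix_toPEquiv_mul, submatrix_apply,
    diagonal_apply_eq, id]

theorem permMatrix_mul_mul_inv_permMatrix_apply (σ : Equiv.Perm ι) (V : Matrix ι ι E) (i j : ι) :
    (σ.permMatrix E * V * σ⁻¹.permMatrix E) i j = V (σ i) (σ j) := by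
  rw [PEquiv.toMatrix_toPEquiv_mul, PEquiv.mul_toMatrix_toPEquiv]
  rfl

end Permutation

section Pivots

variable {n : ℕ}

structure IsPivot (B : Matrix (Fin n) (Fin n) E) (j q : Fin n) : Prop where
  isUnit : IsUnit (B j q)
  eq_zero_of_lt : ∀ c < q, B j c = 0
  eq_zero_below : ∀ i, j < i → B i q = 0

theorem eq_of_isUnit_of_forall_lt_eq_zero [Nontrivial E] {α : Type*} [LinearOrder α]
    {r : α → E} {q q' : α} (hq : IsUnit (r q)) (hq0 : ∀ c < q, r c = 0) (hq' : IsUnit (r q'))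
    (hq'0 : ∀ c < q', r c = 0) : q = q' := by
  by_contra h
  rcases lt_or_gt_of_ne h with h | h
  · exact hq.ne_zero (hq'0 q h)
  · exact hq'.ne_zero (hq0 q' h)

theorem injective_of_isPivot [Nontrivial E] {B : Matrix (Fin n) (Fin n) E} {p : Fin n → Fin n}
    (hB : ∀ j, IsPivot B j (p j)) : Function.Injective p := by
  intro i j h
  by_contra hij
  rcases lt_or_gt_of_ne hij with hlt | hlt
  · exact (hB j).isUnit.ne_zero (h ▸ (hB i).eq_zero_below j hlt)
  · exact (hB i).isUnit.ne_zero (h ▸ (hB j).eq_zero_below i hlt)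

theorem isPivot_mul_permMatrix_mul {U V : Matrix (Fin n) (Fin n) E} {σ : Equiv.Perm (Fin n)}
    (hU : U.IsDiag) (hUu : ∀ i, IsUnit (U i i)) (hV : UnipotentUpper V)
    (hVσ : UnipotentUpper (σ.permMatrix E * V * σ⁻¹.permMatrix E)) (j : Fin n) :
    IsPivot (U * σ.permMatrix E * V) j (σ j) := by
  refine ⟨?_, fun c hc => ?_, fun i hi => ?_⟩ <;> rw [hU.mul_permMatrix_mul_apply]
  · rw [hV.2, mul_one]
    exact hUu j
  · rw [hV.1 _ _ hc, mul_zero]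
  · rw [← permMatrix_mul_mul_inv_permMatrix_apply σ V i j, hVσ.1 _ _ hi, mul_zero]

theorem eq_of_mul_eq_mul_of_isPivot [Nontrivial E] {T T' B B' : Matrix (Fin n) (Fin n) E}
    {p p' : Fin n → Fin n} (hT : UnipotentLower T) (hT' : UnipotentLower T')
    (hB : ∀ j, IsPivot B j (p j)) (hB' : ∀ j, IsPivot B' j (p' j)) (h : T * B = T' * B') :
    T = T' ∧ B = B' ∧ p = p' := by
  suffices key : ∀ i, T i = T' i ∧ B i = B' i ∧ p i = p' i from
    ⟨funext fun i => (key i).1, funext fun i => (key i).2.1, funext fun i => (key i).2.2⟩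
  intro i
  induction i using WellFoundedLT.induction with
  | ind i ih =>
  have hrow := hT.sub_apply_eq_sum hT' (fun k hk => (ih k hk).2.1) (congrFun₂ h i)
  have hD : ∀ j < i, T' i j - T i j = 0 := by
    intro j
    induction j using WellFoundedLT.induction with
    | ind j ihj =>
    intro hj
    have hB'0 : B' i (p j) = 0 := (ih j hj).2.2 ▸ (hB' j).eq_zero_below i hj
    have h0 := hrow (p j)
    rw [(hB j).eq_zero_below i hj, hB'0, sub_zero,
      Finset.sum_eq_single_of_mem j (mem_Iio.mpr hj) fun k hk hkj => ?_] at h0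
    · exact (hB j).isUnit.mul_left_eq_zero.mp h0.symm
    · rcases hkj.lt_or_gt with hlt | hlt
      · rw [ihj k hlt (mem_Iio.mp hk), zero_mul]
      · rw [(hB j).eq_zero_below k hlt, mul_zero]
  have hBi : B i = B' i := funext fun c => sub_eq_zero.mp <| (hrow c).trans <|
    Finset.sum_eq_zero fun k hk => by rw [hD k (mem_Iio.mp hk), zero_mul]
  refine ⟨funext fun k => ?_, hBi, ?_⟩
  · rcases lt_trichotomy k i with hk | rfl | hk
    · exact (sub_eq_zero.mp (hD k hk)).symm
    · rw [hT.2, hT'.2]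
    · rw [hT.1 i k hk, hT'.1 i k hk]
  · have hu' := (hB' i).isUnit
    have hz' := (hB' i).eq_zero_of_lt
    rw [← hBi] at hu' hz'
    exact eq_of_isUnit_of_forall_lt_eq_zero (hB i).isUnit (hB i).eq_zero_of_lt hu' hz'

theorem eq_of_isDiag_mul_permMatrix_mul_eq {ι : Type*} [Fintype ι] [DecidableEq ι]
    {U U' V V' : Matrix ι ι E} {σ : Equiv.Perm ι} (hU : U.IsDiag) (hU' : U'.IsDiag)
    (hUu : ∀ i, IsUnit (U i i)) (hV : ∀ a, V a a = 1) (hV' : ∀ a, V' a a = 1)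
    (h : U * σ.permMatrix E * V = U' * σ.permMatrix E * V') : U = U' ∧ V = V' := by
  have hentry : ∀ i c, U i i * V (σ i) c = U' i i * V' (σ i) c := fun i c => by
    rw [← hU.mul_permMatrix_mul_apply, ← hU'.mul_permMatrix_mul_apply, h]
  have hdiag : ∀ i, U i i = U' i i := fun i => by simpa [hV, hV'] using hentry i (σ i)
  refine ⟨?_, ?_⟩
  · ext i j
    rcases eq_or_ne i j with rfl | hij
    · exact hdiag i
    · rw [hU hij, hU' hij]
  · ext a c
    obtain ⟨i, rfl⟩ := σ.surjective a
    exact (hUu i).mul_left_cancel ((hentry i c).trans (by rw [hdiag]))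

end Pivots

section PivotFactorization

variable {n : ℕ} (B : Matrix (Fin n) (Fin n) E) (π : Equiv.Perm (Fin n))

def pivotDiag : Matrix (Fin n) (Fin n) E :=
  diagonal fun i => B i (π i)

noncomputable def pivotUpper : Matrix (Fin n) (Fin n) E :=
  of fun a c => Ring.inverse (B (π.symm a) a) * B (π.symm a) c

variable {B π}

theorem isDiag_pivotDiag : (pivotDiag B π).IsDiag :=
  isDiag_diagonal _

theorem pivotUpper_apply_apply (i c : Fin n) :
    pivotUpper B π (π i) c = Ring.inverse (B i (π i)) * B i c := by
  simp [pivotUpper]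

theorem isUnit_pivotDiag (hB : ∀ j, IsPivot B j (π j)) : IsUnit (pivotDiag B π) :=
  (diagonalRingHom (Fin n) E).isUnit_map (Pi.isUnit_iff.mpr fun j => (hB j).isUnit)

theorem pivotDiag_mul_permMatrix_mul_pivotUpper (hB : ∀ j, IsPivot B j (π j)) :
    pivotDiag B π * π.permMatrix E * pivotUpper B π = B := by
  ext i c
  rw [isDiag_pivotDiag.mul_permMatrix_mul_apply, pivotUpper_apply_apply, pivotDiag,
    diagonal_apply_eq, Ring.mul_inverse_cancel_left _ _ (hB i).isUnit]

theorem unipotentUpper_pivotUpper (hB : ∀ j, IsPivot B j (π j)) :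
    UnipotentUpper (pivotUpper B π) := by
  refine ⟨fun a c hc => ?_, fun a => ?_⟩ <;> obtain ⟨i, rfl⟩ := π.surjective a <;>
    rw [pivotUpper_apply_apply]
  · rw [(hB i).eq_zero_of_lt c hc, mul_zero]
  · exact Ring.inverse_mul_cancel _ (hB i).isUnit

theorem unipotentUpper_permMatrix_mul_pivotUpper_mul (hB : ∀ j, IsPivot B j (π j)) :
    UnipotentUpper (π.permMatrix E * pivotUpper B π * π⁻¹.permMatrix E) := by
  refine ⟨fun i j hij => ?_, fun i => ?_⟩ <;>
    rw [permMatrix_mul_mul_inv_permMatrix_apply, pivotUpper_apply_apply]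
  · rw [(hB j).eq_zero_below i hij, mul_zero]
  · exact Ring.inverse_mul_cancel _ (hB i).isUnit

variable {𝒜 : Γ → AddSubgroup E} {δ : Fin n → Γ} {lam : Γ}

theorem pivotDiag_mul_permMatrix_mem (hBhom : B ∈ MatrixGrade 𝒜 δ lam) :
    pivotDiag B π * π.permMatrix E ∈ MatrixGrade 𝒜 δ lam := by
  intro i j
  rw [isDiag_pivotDiag.mul_permMatrix_apply]
  split_ifs with h
  · subst h
    simpa [pivotDiag] using hBhom i (π i)
  · exact zero_mem _

variable [DecidableEq Γ] [GradedRing 𝒜]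

theorem pivotUpper_mem (hB : ∀ j, IsPivot B j (π j)) (hBhom : B ∈ MatrixGrade 𝒜 δ lam) :
    pivotUpper B π ∈ MatrixGrade 𝒜 δ 0 := by
  intro a c
  obtain ⟨i, rfl⟩ := π.surjective a
  rw [pivotUpper_apply_apply]
  convert SetLike.mul_mem_graded (SetLike.inverse_mem_graded (hBhom i (π i)) (hB i).isUnit)
    (hBhom i c) using 2
  abel

end PivotFactorization

section Elimination

variable {n : ℕ} {𝒜 : Γ → AddSubgroup E} [DecidableEq Γ] [GradedRing 𝒜] {δ : Fin n → Γ}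
  {lam : Γ}

theorem exists_apply_ne_zero_of_isUnit [Nontrivial E] {ι : Type*} [Fintype ι] [DecidableEq ι]
    {B : Matrix ι ι E} (hB : IsUnit B) (i : ι) : ∃ c, B i c ≠ 0 := by
  obtain ⟨C, hC, -⟩ := isUnit_iff_exists.mp hB
  have : (B * C) i i ≠ 0 := by
    rw [hC, one_apply_eq]
    exact one_ne_zero
  rw [mul_apply] at this
  obtain ⟨c, -, hc⟩ := Finset.exists_ne_zero_of_sum_ne_zero this
  exact ⟨c, left_ne_zero_of_mul hc⟩

theorem one_sub_sum_single_mul_apply (K : Fin n) (c : Fin n → E) (B : Matrix (Fin n) (Fin n) E)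
    (i j : Fin n) : ((1 - ∑ i ∈ Ioi K, single i K (c i)) * B) i j =
      B i j - if K < i then c i * B K j else 0 := by
  simp only [sub_mul, one_mul, Matrix.sub_apply, sum_single_mul_apply, mem_Ioi]

theorem IsPivot.one_sub_sum_single_mul {B : Matrix (Fin n) (Fin n) E} {j K q : Fin n}
    (h : IsPivot B j q) (hj : j < K) (c : Fin n → E) :
    IsPivot ((1 - ∑ i ∈ Ioi K, single i K (c i)) * B) j q := by
  refine ⟨?_, fun c' hc' => ?_, fun i hi => ?_⟩ <;> rw [one_sub_sum_single_mul_apply]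
  · simpa [hj.not_gt] using h.isUnit
  · simpa [hj.not_gt] using h.eq_zero_of_lt c' hc'
  · simp [h.eq_zero_below i hi, h.eq_zero_below K hj]

theorem isPivot_one_sub_sum_single_mul {B : Matrix (Fin n) (Fin n) E} {K q : Fin n}
    (hu : IsUnit (B K q)) (hq : ∀ c < q, B K c = 0) :
    IsPivot ((1 - ∑ i ∈ Ioi K, single i K (B i q * Ring.inverse (B K q))) * B) K q := by
  refine ⟨?_, fun c' hc' => ?_, fun i hi => ?_⟩ <;> rw [one_sub_sum_single_mul_apply]
  · simpa using hu
  · simpa using hq c' hc'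
  · rw [if_pos hi, mul_assoc, Ring.inverse_mul_cancel _ hu, mul_one, sub_self]

theorem exists_eliminate_below_pivot [Nontrivial E]
    (hdiv : ∀ (γ : Γ) (x : E), x ∈ 𝒜 γ → x ≠ 0 → IsUnit x)
    {B : Matrix (Fin n) (Fin n) E} (hB : IsUnit B) (hBhom : B ∈ MatrixGrade 𝒜 δ lam)
    {p : Fin n → Fin n} {K : Fin n} (hp : ∀ j < K, IsPivot B j (p j)) :
    ∃ (L B' : Matrix (Fin n) (Fin n) E) (q : Fin n), B = L * B' ∧ UnipotentLower L ∧
      L ∈ Submonoid.closure (homogeneousElementary 𝒜 δ) ∧ IsUnit B' ∧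
      B' ∈ MatrixGrade 𝒜 δ lam ∧ ∀ j ≤ K, IsPivot B' j (Function.update p K q j) := by
  obtain ⟨q, hq, hq0⟩ : ∃ q, B K q ≠ 0 ∧ ∀ c < q, B K c = 0 := by
    obtain ⟨q, hq, hmin⟩ :=
      wellFounded_lt.has_min {c | B K c ≠ 0} (exists_apply_ne_zero_of_isUnit hB K)
    exact ⟨q, hq, fun c hc => not_not.mp fun h => hmin c h hc⟩
  have hu : IsUnit (B K q) := hdiv _ _ (hBhom K q) hq
  set c : Fin n → E := fun i => B i q * Ring.inverse (B K q)
  have hc : ∀ i ∈ Ioi K, c i ∈ 𝒜 (δ K - δ i) := fun i _ => by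
    convert SetLike.mul_mem_graded (hBhom i q) (SetLike.inverse_mem_graded (hBhom K q) hu)
      using 2
    abel
  set N := ∑ i ∈ Ioi K, single i K (c i)
  have hinv : (1 + N) * (1 - N) = 1 ∧ (1 - N) * (1 + N) = 1 := by
    have hNN : N * N = 0 := sum_single_mul_sum_single notMem_Ioi_self c c
    constructor <;> noncomm_ring <;> rw [hNN] <;> abel
  have hNcl : 1 - N ∈ Submonoid.closure (homogeneousElementary 𝒜 δ) := by
    have hneg : ∑ i ∈ Ioi K, single i K ((-c) i) = -N := by
      simp only [N, Pi.neg_apply, ← sum_neg_distrib, single_neg]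
    rw [sub_eq_add_neg, ← hneg]
    exact one_add_sum_single_mem_closure notMem_Ioi_self fun i hi => neg_mem (hc i hi)
  refine ⟨1 + N, (1 - N) * B, q, by rw [← mul_assoc, hinv.1, one_mul],
    unipotentLower_one_add_sum_single (fun _ => mem_Ioi.mp) c,
    one_add_sum_single_mem_closure notMem_Ioi_self hc,
    (isUnit_iff_exists.mpr ⟨1 + N, hinv.2, hinv.1⟩).mul hB,
    by simpa using MatrixGrade.mul_mem (closure_homogeneousElementary_subset hNcl) hBhom,
    fun j hj => ?_⟩
  rcases hj.lt_or_eq with hj | rfl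
  · rw [Function.update_of_ne hj.ne]
    exact (hp j hj).one_sub_sum_single_mul hj c
  · rw [Function.update_self]
    exact isPivot_one_sub_sum_single_mul hu hq0

theorem exists_eq_unipotentLower_mul_isPivot [Nontrivial E]
    (hdiv : ∀ (γ : Γ) (x : E), x ∈ 𝒜 γ → x ≠ 0 → IsUnit x)
    {A : Matrix (Fin n) (Fin n) E} (hA : IsUnit A) (hAhom : A ∈ MatrixGrade 𝒜 δ lam) :
    ∃ (T B : Matrix (Fin n) (Fin n) E) (p : Fin n → Fin n), A = T * B ∧ UnipotentLower T ∧
      T ∈ Submonoid.closure (homogeneousElementary 𝒜 δ) ∧ B ∈ MatrixGrade 𝒜 δ lam ∧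
      ∀ j, IsPivot B j (p j) := by
  have stage : ∀ k ≤ n, ∃ (T B : Matrix (Fin n) (Fin n) E) (p : Fin n → Fin n), A = T * B ∧
      UnipotentLower T ∧ T ∈ Submonoid.closure (homogeneousElementary 𝒜 δ) ∧ IsUnit B ∧
      B ∈ MatrixGrade 𝒜 δ lam ∧ ∀ j : Fin n, (j : ℕ) < k → IsPivot B j (p j) := by
    intro k
    induction k with
    | zero => exact fun _ => ⟨1, A, id, (one_mul A).symm, unipotentLower_one, one_mem _, hA,
        hAhom, fun j hj => absurd hj (Nat.not_lt_zero _)⟩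
    | succ k ih =>
      intro hk
      obtain ⟨T, B, p, rfl, hT, hTcl, hB, hBhom, hp⟩ := ih (by omega)
      obtain ⟨L, B', q, rfl, hL, hLcl, hB', hB'hom, hp'⟩ :=
        exists_eliminate_below_pivot (K := ⟨k, hk⟩) hdiv hB hBhom fun j hj => hp j hj
      exact ⟨T * L, B', _, (mul_assoc _ _ _).symm, hT.mul hL, mul_mem hTcl hLcl, hB', hB'hom,
        fun j hj => hp' j (Nat.lt_succ_iff.mp hj)⟩
  obtain ⟨T, B, p, hA, hT, hTcl, -, hBhom, hp⟩ := stage n le_rfl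
  exact ⟨T, B, p, hA, hT, hTcl, hBhom, fun j => hp j j.2⟩

end Elimination

end

/-- Bruhat normal form.  Let `E` be a `Γ`-graded division ring
(`Γ` abelian), `δ̄ ∈ Γⁿ`, and `S = Mₙ(E)(δ̄)`.  Every homogeneous unit `A` of `S`
has a unique strict Bruhat normal form `A = T * U * P_π * V`; moreover `T`, `U * P_π`
and `V` are homogeneous with `deg T = deg V = 0`, `deg (U * P_π) = deg A`, and `T` is a
product of homogeneous elementary matrices (of degree `0`). -/
theorem bruhat_normal_form {Γ E : Type*} [AddCommGroup Γ] [DecidableEq Γ]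
    [Ring E] [Nontrivial E] (𝒜 : Γ → AddSubgroup E) [GradedRing 𝒜]
    (hdiv : ∀ (γ : Γ) (x : E), x ∈ 𝒜 γ → x ≠ 0 → IsUnit x)
    {n : ℕ} (δ : Fin n → Γ)
    (A : Matrix (Fin n) (Fin n) E) (hA : IsUnit A)
    (lam : Γ) (hAhom : A ∈ MatrixGrade 𝒜 δ lam) :
    ∃ (T U : Matrix (Fin n) (Fin n) E) (π : Equiv.Perm (Fin n))
      (V : Matrix (Fin n) (Fin n) E),
      -- strict Bruhat normal form
      (UnipotentLower T ∧ U.IsDiag ∧ IsUnit U ∧ UnipotentUpper V ∧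
        UnipotentUpper (π.permMatrix E * V * (π⁻¹).permMatrix E) ∧
        A = T * U * π.permMatrix E * V) ∧
      -- homogeneity of the factors
      (T ∈ MatrixGrade 𝒜 δ 0 ∧ V ∈ MatrixGrade 𝒜 δ 0 ∧
        U * π.permMatrix E ∈ MatrixGrade 𝒜 δ lam ∧
        T ∈ Submonoid.closure {e : Matrix (Fin n) (Fin n) E |
          ∃ (i j : Fin n) (x : E), i ≠ j ∧ x ∈ 𝒜 (δ j - δ i) ∧
            e = 1 + Matrix.single i j x}) ∧
      -- uniqueness of the strict Bruhat normal form
      ∀ (T' U' : Matrix (Fin n) (Fin n) E) (π' : Equiv.Perm (Fin n))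
        (V' : Matrix (Fin n) (Fin n) E),
        UnipotentLower T' → U'.IsDiag → IsUnit U' → UnipotentUpper V' →
        UnipotentUpper (π'.permMatrix E * V' * (π'⁻¹).permMatrix E) →
        A = T' * U' * π'.permMatrix E * V' →
        T' = T ∧ U' = U ∧ π' = π ∧ V' = V := by
  obtain ⟨T, B, p, rfl, hT, hTcl, hBhom, hB⟩ :=
    exists_eq_unipotentLower_mul_isPivot hdiv (δ := δ) hA hAhom
  set π := Equiv.ofBijective p (injective_of_isPivot hB).bijective_of_finite
  have hfac := pivotDiag_mul_permMatrix_mul_pivotUpper (π := π) hB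
  refine ⟨T, pivotDiag B π, π, pivotUpper B π, ⟨hT, isDiag_pivotDiag, isUnit_pivotDiag hB,
    unipotentUpper_pivotUpper hB, unipotentUpper_permMatrix_mul_pivotUpper_mul hB,
    by simp only [mul_assoc] at hfac ⊢; rw [hfac]⟩, ⟨closure_homogeneousElementary_subset hTcl,
    pivotUpper_mem hB hBhom, pivotDiag_mul_permMatrix_mem hBhom, hTcl⟩, ?_⟩
  intro T' U' π' V' hT' hU' hU'u hV' hV'π heq
  have hB' := isPivot_mul_permMatrix_mul hU' (hU'.isUnit_apply hU'u) hV' hV'π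
  obtain ⟨rfl, hBB', hpp'⟩ := eq_of_mul_eq_mul_of_isPivot hT' hT hB' hB
    (by rw [heq, mul_assoc, mul_assoc, mul_assoc])
  obtain rfl : π' = π := Equiv.ext (congrFun hpp')
  obtain ⟨hUU, hVV⟩ := eq_of_isDiag_mul_permMatrix_mul_eq hU' isDiag_pivotDiag
    (hU'.isUnit_apply hU'u) hV'.2 (unipotentUpper_pivotUpper hB).2 (hBB'.trans hfac.symm)
  exact ⟨rfl, hUU, rfl, hVV⟩
end

section
/- Let Γ be an abelian group, E a Γ-graded division ring, δ̄ ∈ Γⁿ, and S = Mₙ(E)(δ̄). The set M^h of homogeneous monomial matrices in S is a subgroup of S_h*, and the map Δ : M^h → E_h*/[E_h*,E_h*] defined by Δ(U·P_π) = sgn(π)·u₁⋯uₙ mod [E_h*,E_h*], where U = diag(u₁,…,uₙ), is a well-defined group homomorphism. -/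
/-!
A monomial matrix `U·P_π` with unit entries determines `U` and `π`, and
`(U·P_π)(V·P_σ) = (U·π(V))·P_{σπ}` with `π(V) = diag(v_{π 1}, …, v_{π n})`. So for any
subgroup `H` of `Eˣ` the monomial matrices with entries in `H` form a group, and once the
entries are multiplied in the abelianization of `H` the reindexing by `π` disappears: `Δ` is
multiplicative because `sgn` is. A homogeneous monomial matrix has homogeneous entries, so it
lies in this group for `H = E_h*`, which contains the signs `±1 ∈ E_0`.
-/

open Equiv

namespace Matrix

variable {ι R : Type*} [Fintype ι] [DecidableEq ι]

section Semiring

variable [Semiring R]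

theorem diagonal_mul_permMatrix_apply (u : ι → R) (π : Perm ι) (i j : ι) :
    (diagonal u * π.permMatrix R) i j = if π i = j then u i else 0 := by
  simp [diagonal_mul, PEquiv.toMatrix_apply, Equiv.toPEquiv_apply]

theorem permMatrix_mul_diagonal (π : Perm ι) (v : ι → R) :
    π.permMatrix R * diagonal v = diagonal (v ∘ π) * π.permMatrix R := by
  ext i j
  by_cases h : π i = j <;> simp [diagonal_mul, mul_diagonal, PEquiv.toMatrix_apply, h]

theorem diagonal_mul_permMatrix_mul_diagonal_mul_permMatrix (u v : ι → R) (π σ : Perm ι) :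
    diagonal u * π.permMatrix R * (diagonal v * σ.permMatrix R) =
      diagonal (fun i => u i * v (π i)) * (σ * π).permMatrix R := by
  rw [permMatrix_mul, ← diagonal_mul_diagonal, Matrix.mul_assoc,
    ← Matrix.mul_assoc _ (diagonal v), permMatrix_mul_diagonal]
  simp only [Matrix.mul_assoc]
  rfl

theorem diagonal_mul_permMatrix_eq_iff {u v : ι → R} {π σ : Perm ι} (hu : ∀ i, u i ≠ 0) :
    diagonal u * π.permMatrix R = diagonal v * σ.permMatrix R ↔ π = σ ∧ u = v := by
  refine ⟨fun h => ?_, fun ⟨hπ, huv⟩ => hπ ▸ huv ▸ rfl⟩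
  have h_entry (i : ι) : u i = if σ i = π i then v i else 0 := by
    simpa [diagonal_mul_permMatrix_apply] using congrFun (congrFun h i) (π i)
  have hπ : π = σ := Equiv.ext fun i => by
    by_contra hne
    exact hu i (by simpa [Ne.symm hne] using h_entry i)
  subst hπ
  exact ⟨rfl, funext fun i => by simpa using h_entry i⟩

variable (H : Subgroup Rˣ)

def monomialSubgroup : Subgroup (Matrix ι ι R)ˣ where
  carrier := {M | ∃ (u : ι → H) (π : Perm ι),
    (M : Matrix ι ι R) = diagonal (fun i => ((u i : Rˣ) : R)) * π.permMatrix R}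
  one_mem' := ⟨1, 1, by simp⟩
  mul_mem' := by
    rintro M N ⟨u, π, hM⟩ ⟨v, σ, hN⟩
    refine ⟨fun i => u i * v (π i), σ * π, ?_⟩
    rw [Units.val_mul, hM, hN, diagonal_mul_permMatrix_mul_diagonal_mul_permMatrix]
    simp
  inv_mem' := by
    rintro M ⟨u, π, hM⟩
    refine ⟨fun i => (u (π.symm i))⁻¹, π⁻¹, Units.inv_eq_of_mul_eq_one_right ?_⟩
    rw [hM, diagonal_mul_permMatrix_mul_diagonal_mul_permMatrix]
    simp

variable {H}

theorem mem_monomialSubgroup {M : (Matrix ι ι R)ˣ} :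
    M ∈ monomialSubgroup H ↔ ∃ (u : ι → H) (π : Perm ι),
      (M : Matrix ι ι R) = diagonal (fun i => ((u i : Rˣ) : R)) * π.permMatrix R :=
  Iff.rfl

theorem coe_diagonal_mul_permMatrix_eq_iff [Nontrivial R] {u v : ι → H} {π σ : Perm ι} :
    diagonal (fun i => ((u i : Rˣ) : R)) * π.permMatrix R =
        diagonal (fun i => ((v i : Rˣ) : R)) * σ.permMatrix R ↔ π = σ ∧ u = v := by
  rw [diagonal_mul_permMatrix_eq_iff fun i => (u i : Rˣ).ne_zero]
  refine and_congr_right fun _ => ⟨fun h => funext fun i => ?_, fun h => h ▸ rfl⟩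
  exact Subtype.ext (Units.ext (congrFun h i))

end Semiring

section Ring

variable [Ring R] (H : Subgroup Rˣ) (hH : -1 ∈ H)

def signInSubgroup : Perm ι →* H :=
  ((Units.map (Int.castRingHom R).toMonoidHom).comp Perm.sign).codRestrict H fun π => by
    rcases Int.units_eq_one_or (Perm.sign π) with h | h <;> simp [h, hH]

noncomputable def monomialDetValue (u : ι → H) (π : Perm ι) : Abelianization H :=
  Abelianization.of (signInSubgroup H hH π) * ∏ i, Abelianization.of (u i)

theorem monomialDetValue_mul (u v : ι → H) (π σ : Perm ι) :
    monomialDetValue H hH (fun i => u i * v (π i)) (σ * π) =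
      monomialDetValue H hH u π * monomialDetValue H hH v σ := by
  simp only [monomialDetValue, map_mul, Finset.prod_mul_distrib,
    Equiv.prod_comp π fun i => Abelianization.of (v i)]
  rw [mul_comm (Abelianization.of (signInSubgroup H hH σ)), mul_mul_mul_comm]

variable [Nontrivial R] {H}

theorem monomialDetValue_eq_of_eq {M : (Matrix ι ι R)ˣ} {u v : ι → H} {π σ : Perm ι}
    (hu : (M : Matrix ι ι R) = diagonal (fun i => ((u i : Rˣ) : R)) * π.permMatrix R)
    (hv : (M : Matrix ι ι R) = diagonal (fun i => ((v i : Rˣ) : R)) * σ.permMatrix R) :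
    monomialDetValue H hH u π = monomialDetValue H hH v σ := by
  obtain ⟨rfl, rfl⟩ := coe_diagonal_mul_permMatrix_eq_iff.1 (hu.symm.trans hv)
  rfl

variable (H)

noncomputable def monomialDet : monomialSubgroup (ι := ι) H →* Abelianization H :=
  MonoidHom.mk'
    (fun M => monomialDetValue H hH (mem_monomialSubgroup.1 M.2).choose
      (mem_monomialSubgroup.1 M.2).choose_spec.choose) fun M N => by
    obtain ⟨u, π, hM⟩ := mem_monomialSubgroup.1 M.2
    obtain ⟨v, σ, hN⟩ := mem_monomialSubgroup.1 N.2
    have hMN : ((M * N).1 : Matrix ι ι R) =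
        diagonal (fun i => (((u i * v (π i) : H) : Rˣ) : R)) * (σ * π).permMatrix R := by
      rw [Subgroup.coe_mul, Units.val_mul, hM, hN,
        diagonal_mul_permMatrix_mul_diagonal_mul_permMatrix]
      rfl
    rw [monomialDetValue_eq_of_eq hH (mem_monomialSubgroup.1 (M * N).2).choose_spec.choose_spec hMN,
      monomialDetValue_eq_of_eq hH (mem_monomialSubgroup.1 M.2).choose_spec.choose_spec hM,
      monomialDetValue_eq_of_eq hH (mem_monomialSubgroup.1 N.2).choose_spec.choose_spec hN,
      monomialDetValue_mul]

variable {H}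

theorem monomialDet_apply (M : monomialSubgroup (ι := ι) H) (u : ι → H) (π : Perm ι)
    (h : (M.1 : Matrix ι ι R) = diagonal (fun i => ((u i : Rˣ) : R)) * π.permMatrix R) :
    monomialDet H hH M = monomialDetValue H hH u π :=
  monomialDetValue_eq_of_eq hH (mem_monomialSubgroup.1 M.2).choose_spec.choose_spec h

end Ring

end Matrix

open Matrix

theorem mem_monomialSubgroup_inf_iff {Γ E ι : Type*} [AddCommGroup Γ] [Ring E] [Fintype ι]
    [DecidableEq ι] {𝒜 : Γ → AddSubgroup E} {δ : ι → Γ}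
    {Eh : Subgroup Eˣ} (hEh : ∀ u : Eˣ, u ∈ Eh ↔ ∃ γ, u.val ∈ 𝒜 γ)
    {Sh : Subgroup (Matrix ι ι E)ˣ} (hSh : ∀ A : (Matrix ι ι E)ˣ,
      A ∈ Sh ↔ ∃ lam, A.val ∈ MatrixGrade 𝒜 δ lam) (M : (Matrix ι ι E)ˣ) :
    M ∈ monomialSubgroup Eh ⊓ Sh ↔
      (∃ (u : ι → E) (π : Perm ι), (∀ i, IsUnit (u i)) ∧
        M.val = diagonal u * π.permMatrix E) ∧ ∃ lam, M.val ∈ MatrixGrade 𝒜 δ lam := by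
  rw [Subgroup.mem_inf, hSh, mem_monomialSubgroup]
  refine and_congr_left fun ⟨lam, hlam⟩ => ⟨?_, ?_⟩
  · rintro ⟨u, π, hM⟩
    exact ⟨_, π, fun i => (u i : Eˣ).isUnit, hM⟩
  · rintro ⟨u, π, hu, hM⟩
    have h_entry (i : ι) : u i ∈ 𝒜 (lam + δ (π i) - δ i) := by
      simpa [hM, diagonal_mul_permMatrix_apply] using hlam i (π i)
    exact ⟨fun i => ⟨(hu i).unit, (hEh _).2 ⟨_, h_entry i⟩⟩, π, hM⟩

theorem monomial_delta_hom_general {Γ E : Type*} [AddCommGroup Γ] [DecidableEq Γ]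
    [Ring E] [Nontrivial E] (𝒜 : Γ → AddSubgroup E) [GradedRing 𝒜]
    {n : ℕ} (δ : Fin n → Γ)
    (Eh : Subgroup Eˣ) (hEh : ∀ u : Eˣ, u ∈ Eh ↔ ∃ γ, u.val ∈ 𝒜 γ)
    (Sh : Subgroup (Matrix (Fin n) (Fin n) E)ˣ)
    (hSh : ∀ A : (Matrix (Fin n) (Fin n) E)ˣ,
      A ∈ Sh ↔ ∃ lam, A.val ∈ MatrixGrade 𝒜 δ lam) :
    ∃ Mh : Subgroup (Matrix (Fin n) (Fin n) E)ˣ,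
      -- `Mh` is exactly the set of homogeneous monomial matrices …
      (∀ M : (Matrix (Fin n) (Fin n) E)ˣ, M ∈ Mh ↔
        ((∃ (u : Fin n → E) (π : Equiv.Perm (Fin n)), (∀ i, IsUnit (u i)) ∧
          M.val = Matrix.diagonal u * π.permMatrix E) ∧
         ∃ lam, M.val ∈ MatrixGrade 𝒜 δ lam)) ∧
      -- … it is contained in the group of homogeneous units …
      Mh ≤ Sh ∧
      -- … and `Δ` is a well-defined group homomorphism on it.
      ∃ Δ : ↥Mh →* Abelianization ↥Eh,
        ∀ (M : ↥Mh) (u : Fin n → E) (π : Equiv.Perm (Fin n)),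
          (∀ i, IsUnit (u i)) →
          M.val.val = Matrix.diagonal u * π.permMatrix E →
          ∀ w : ↥Eh,
            w.val.val = ((Equiv.Perm.sign π : ℤ) : E) * (List.ofFn u).prod →
            Δ M = Abelianization.of w := by
  have hneg : (-1 : Eˣ) ∈ Eh :=
    (hEh _).2 ⟨0, by simpa using (𝒜 0).neg_mem (SetLike.one_mem_graded 𝒜)⟩
  refine ⟨monomialSubgroup Eh ⊓ Sh, mem_monomialSubgroup_inf_iff hEh hSh, inf_le_right,
    (monomialDet Eh hneg).comp (Subgroup.inclusion inf_le_left), ?_⟩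
  intro M u π hu hM w hw
  obtain ⟨v, σ, hv⟩ := (Subgroup.mem_inf.1 M.2).1
  obtain ⟨rfl, rfl⟩ :=
    (diagonal_mul_permMatrix_eq_iff fun i => (hu i).ne_zero).1 (hM.symm.trans hv)
  have hw_eq : w = signInSubgroup Eh hneg π * (List.ofFn v).prod := by
    let c : Eh →* E := (Units.coeHom E).comp Eh.subtype
    refine Subtype.ext (Units.ext ?_)
    change c w = c (signInSubgroup Eh hneg π * (List.ofFn v).prod)
    rw [map_mul, map_list_prod, List.map_ofFn]
    exact hw
  rw [MonoidHom.comp_apply, monomialDet_apply hneg _ v π hv, monomialDetValue, hw_eq, map_mul,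
    map_list_prod, List.map_ofFn, List.prod_ofFn]
  rfl

/-- the set `M^h` of homogeneous monomial matrices of
`S = Mₙ(E)(δ̄)` is a subgroup of `S_h*`, and
`Δ(U ⬝ P_π) = sgn(π) · u₁ ⋯ uₙ mod [E_h*, E_h*]` (with `U = diag(u₁, …, uₙ)`) is a
well-defined group homomorphism `Δ : M^h → E_h*/[E_h*, E_h*]`. -/
theorem monomial_delta_hom {Γ E : Type*} [AddCommGroup Γ] [DecidableEq Γ]
    [Ring E] [Nontrivial E] (𝒜 : Γ → AddSubgroup E) [GradedRing 𝒜]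
    (hdiv : ∀ (γ : Γ) (x : E), x ∈ 𝒜 γ → x ≠ 0 → IsUnit x)
    {n : ℕ} (δ : Fin n → Γ)
    (Eh : Subgroup Eˣ) (hEh : ∀ u : Eˣ, u ∈ Eh ↔ ∃ γ, u.val ∈ 𝒜 γ)
    (Sh : Subgroup (Matrix (Fin n) (Fin n) E)ˣ)
    (hSh : ∀ A : (Matrix (Fin n) (Fin n) E)ˣ,
      A ∈ Sh ↔ ∃ lam, A.val ∈ MatrixGrade 𝒜 δ lam) :
    ∃ Mh : Subgroup (Matrix (Fin n) (Fin n) E)ˣ,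
      -- `Mh` is exactly the set of homogeneous monomial matrices …
      (∀ M : (Matrix (Fin n) (Fin n) E)ˣ, M ∈ Mh ↔
        ((∃ (u : Fin n → E) (π : Equiv.Perm (Fin n)), (∀ i, IsUnit (u i)) ∧
          M.val = Matrix.diagonal u * π.permMatrix E) ∧
         ∃ lam, M.val ∈ MatrixGrade 𝒜 δ lam)) ∧
      -- … it is contained in the group of homogeneous units …
      Mh ≤ Sh ∧
      -- … and `Δ` is a well-defined group homomorphism on it.
      ∃ Δ : ↥Mh →* Abelianization ↥Eh,
        ∀ (M : ↥Mh) (u : Fin n → E) (π : Equiv.Perm (Fin n)),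
          (∀ i, IsUnit (u i)) →
          M.val.val = Matrix.diagonal u * π.permMatrix E →
          ∀ w : ↥Eh,
            w.val.val = ((Equiv.Perm.sign π : ℤ) : E) * (List.ofFn u).prod →
            Δ M = Abelianization.of w :=
  monomial_delta_hom_general 𝒜 δ Eh hEh Sh hSh
end

section
/- Let Γ be an abelian group, E a commutative Γ-graded ring, δ̄ = (δ₁,…,δₙ) ∈ Γⁿ, and λ ∈ Γ. If a ∈ Mₙ(E)(δ̄)_λ, i.e. the (i,j)-entry of a lies in E_{λ+δⱼ−δᵢ} for all i,j, then det(a) ∈ E_{nλ}. -/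
theorem Equiv.Perm.sum_add_sub_apply {ι Γ : Type*} [Fintype ι] [AddCommGroup Γ]
    (σ : Equiv.Perm ι) (δ : ι → Γ) (lam : Γ) :
    ∑ i, (lam + δ i - δ (σ i)) = Fintype.card ι • lam := by
  rw [Finset.sum_sub_distrib, Finset.sum_add_distrib, Equiv.sum_comp σ δ, add_sub_cancel_right,
    Finset.sum_const, Finset.card_univ]

/-- Each term `sign τ • ∏ i, a (τ i) i` of the Leibniz expansion is homogeneous of degree
`∑ i, (lam + δ i - δ (τ i))`, and the `δ`'s cancel because `τ` is a bijection. -/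
theorem Matrix.det_mem_graded {ι Γ E S : Type*} [Fintype ι] [DecidableEq ι] [AddCommGroup Γ]
    [CommRing E] [SetLike S E] [AddSubgroupClass S E] (𝒜 : Γ → S) [SetLike.GradedMonoid 𝒜]
    (δ : ι → Γ) (lam : Γ) (a : Matrix ι ι E) (ha : ∀ i j, a i j ∈ 𝒜 (lam + δ j - δ i)) :
    a.det ∈ 𝒜 (Fintype.card ι • lam) := by
  rw [Matrix.det_apply]
  refine sum_mem fun τ _ => zsmul_mem ?_ _
  rw [← τ.sum_add_sub_apply δ lam]
  exact SetLike.prod_mem_graded 𝒜 _ _ fun i _ => ha (τ i) i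

/-- let `E` be a commutative `Γ`-graded ring and `δ̄ ∈ Γⁿ`.  If
`a ∈ Mₙ(E)(δ̄)_λ`, i.e. the `(i,j)`-entry of `a` lies in `E_{λ + δⱼ - δᵢ}` for all
`i, j`, then `det a ∈ E_{nλ}`. -/
theorem det_of_homogeneous_matrix {Γ E : Type*} [AddCommGroup Γ] [DecidableEq Γ]
    [CommRing E] (𝒜 : Γ → AddSubgroup E) [GradedRing 𝒜]
    {n : ℕ} (δ : Fin n → Γ) (lam : Γ)
    (a : Matrix (Fin n) (Fin n) E)
    (ha : ∀ i j, a i j ∈ 𝒜 (lam + δ j - δ i)) :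
    a.det ∈ 𝒜 (n • lam) := by
  simpa only [Fintype.card_fin] using a.det_mem_graded 𝒜 δ lam ha
end

section
/- Let Γ be a torsion-free abelian group and E a Γ-graded division ring. Then every unit of E is homogeneous, i.e. E* = E_h*, and E has no zero divisors. -/
/-!
A torsion-free abelian group embeds into its divisible hull, a `ℚ`-vector space, and so has the
two-unique-sums property. If `i + j` is attained by a unique pair of degrees of the supports of
`x` and `y`, the `(i + j)`-component of `x * y` is `xᵢ * yⱼ`, which is nonzero when `xᵢ` is a unit.
-/

open DirectSum Finset

instance IsAddTorsionFree.twoUniqueSums {G : Type*} [AddCommGroup G] [IsAddTorsionFree G] :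
    TwoUniqueSums G :=
  .of_injective_addHom (DivisibleHull.coeAddMonoidHom G).toAddHom DivisibleHull.coe_injective
    inferInstance

namespace DirectSum

variable {ι A σ : Type*} [AddMonoid ι] [DecidableEq ι] [Semiring A] [SetLike σ A]
  [AddSubmonoidClass σ A] (𝒜 : ι → σ) [GradedRing 𝒜]

section Support

variable [∀ (i : ι) (x : 𝒜 i), Decidable (x ≠ 0)]

theorem support_decompose_nonempty {x : A} (hx : x ≠ 0) : (decompose 𝒜 x).support.Nonempty := by
  rw [nonempty_iff_ne_empty, Ne, DFinsupp.support_eq_empty, ← decompose_zero 𝒜]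
  exact (decompose 𝒜).injective.ne hx

theorem eq_of_mem_support_decompose {x : A} {i j : ι} (hx : x ∈ 𝒜 i)
    (hj : j ∈ (decompose 𝒜 x).support) : j = i := by
  by_contra hji
  exact DFinsupp.mem_support_iff.mp hj (Subtype.ext (decompose_of_mem_ne 𝒜 hx (Ne.symm hji)))

theorem mem_of_support_decompose_eq_singleton {x : A} {i : ι}
    (h : (decompose 𝒜 x).support = {i}) : x ∈ 𝒜 i := by
  rw [← sum_support_decompose 𝒜 x, h, sum_singleton]
  exact (decompose 𝒜 x i).2

theorem coe_decompose_mul_add_of_uniqueAdd {x y : A} {i j : ι}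
    (h : UniqueAdd (decompose 𝒜 x).support (decompose 𝒜 y).support i j) :
    (decompose 𝒜 (x * y) (i + j) : A) = decompose 𝒜 x i * decompose 𝒜 y j := by
  rw [decompose_mul, coe_mul_apply]
  refine sum_eq_single (i, j) (fun p hp hpij => ?_) (fun hij => ?_)
  · simp only [mem_filter, mem_product] at hp
    exact absurd (Prod.ext_iff.mpr (h hp.1.1 hp.1.2 hp.2)) hpij
  · simp only [mem_filter, mem_product, and_true, not_and_or, DFinsupp.mem_support_iff,
      not_not] at hij
    rcases hij with hi | hj
    · simp [hi]
    · simp [hj]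

variable {𝒜} in
theorem mem_support_decompose_mul_of_uniqueAdd
    (hdiv : ∀ (i : ι) (x : A), x ∈ 𝒜 i → x ≠ 0 → IsUnit x) {x y : A} {i j : ι}
    (hi : i ∈ (decompose 𝒜 x).support) (hj : j ∈ (decompose 𝒜 y).support)
    (h : UniqueAdd (decompose 𝒜 x).support (decompose 𝒜 y).support i j) :
    i + j ∈ (decompose 𝒜 (x * y)).support := by
  rw [DFinsupp.mem_support_iff] at hi hj ⊢
  rw [Ne, ← ZeroMemClass.coe_eq_zero, coe_decompose_mul_add_of_uniqueAdd 𝒜 h,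
    (hdiv i _ (decompose 𝒜 x i).2 (by simpa using hi)).mul_right_eq_zero]
  simpa using hj

end Support

variable {𝒜}

theorem noZeroDivisors_of_uniqueSums [UniqueSums ι]
    (hdiv : ∀ (i : ι) (x : A), x ∈ 𝒜 i → x ≠ 0 → IsUnit x) : NoZeroDivisors A := by
  classical
  refine ⟨fun {x y} hxy => or_iff_not_and_not.mpr fun ⟨hx, hy⟩ => ?_⟩
  obtain ⟨i, hi, j, hj, huniq⟩ := UniqueSums.uniqueAdd_of_nonempty
    (support_decompose_nonempty 𝒜 hx) (support_decompose_nonempty 𝒜 hy)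
  simpa [hxy] using mem_support_decompose_mul_of_uniqueAdd hdiv hi hj huniq

/-- If `u * v = 1` and `u` or `v` had two degrees, two distinct uniquely attained degrees would
occur in `1`, which is homogeneous of degree `0`. -/
theorem exists_mem_of_isUnit [TwoUniqueSums ι] [Nontrivial A]
    (hdiv : ∀ (i : ι) (x : A), x ∈ 𝒜 i → x ≠ 0 → IsUnit x) {u : A} (hu : IsUnit u) :
    ∃ i, u ∈ 𝒜 i := by
  classical
  obtain ⟨⟨u, v, huv, -⟩, rfl⟩ := hu
  set S := (decompose 𝒜 u).support
  set T := (decompose 𝒜 v).support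
  have hS : S.Nonempty := support_decompose_nonempty 𝒜 (left_ne_zero_of_mul_eq_one huv)
  have hT : T.Nonempty := support_decompose_nonempty 𝒜 (right_ne_zero_of_mul_eq_one huv)
  have hdeg : ∀ p ∈ S ×ˢ T, UniqueAdd S T p.1 p.2 → p.1 + p.2 = 0 := fun p hp hup => by
    rw [mem_product] at hp
    have := mem_support_decompose_mul_of_uniqueAdd hdiv hp.1 hp.2 hup
    rw [huv] at this
    exact eq_of_mem_support_decompose 𝒜 SetLike.GradedOne.one_mem this
  have hST : #S * #T ≤ 1 := by
    by_contra! hlt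
    obtain ⟨p, hp, q, hq, hpq, hup, huq⟩ := TwoUniqueSums.uniqueAdd_of_one_lt_card hlt
    rw [mem_product] at hq
    refine hpq (Prod.ext_iff.mpr (hup hq.1 hq.2 ?_)).symm
    rw [hdeg p hp hup, hdeg q (mem_product.mpr hq) huq]
  obtain ⟨i, hi⟩ := card_eq_one.mp (le_antisymm (by nlinarith [hT.card_pos]) hS.card_pos)
  exact ⟨i, mem_of_support_decompose_eq_singleton 𝒜 hi⟩

end DirectSum

/-- let `Γ` be a torsion-free abelian group and `E` a `Γ`-graded
division ring.  Then every unit of `E` is homogeneous (`E* = E_h*`), and `E` has no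
zero divisors. -/
theorem units_homogeneous_of_torsionFree {Γ E : Type*} [AddCommGroup Γ] [DecidableEq Γ]
    [Ring E] [Nontrivial E] (𝒜 : Γ → AddSubgroup E) [GradedRing 𝒜]
    (hdiv : ∀ (γ : Γ) (x : E), x ∈ 𝒜 γ → x ≠ 0 → IsUnit x)
    -- `Γ` is torsion-free
    (htf : ∀ (γ : Γ) (m : ℕ), m ≠ 0 → m • γ = 0 → γ = 0) :
    (∀ u : Eˣ, ∃ γ : Γ, u.val ∈ 𝒜 γ) ∧
    (∀ x y : E, x * y = 0 → x = 0 ∨ y = 0) := by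
  have : IsAddTorsionFree Γ :=
    ⟨fun m hm a b hab => sub_eq_zero.mp (htf _ m hm (by rw [nsmul_sub, sub_eq_zero]; exact hab))⟩
  have := noZeroDivisors_of_uniqueSums hdiv
  exact ⟨fun u => exists_mem_of_isUnit hdiv u.isUnit, fun _ _ => mul_eq_zero.mp⟩
end

section
/- Let Γ be a torsion-free abelian group and E a Γ-graded division algebra with center T, and let Λ = (Γ_E/Γ_T) ∧ (Γ_E/Γ_T) be the exterior square (over ℤ) of the finite abelian group Γ_E/Γ_T. Then there is a surjective group homomorphism from Λ onto [E*,E*]/[E*,E₀*] (in particular this quotient is an abelian group); consequently, for every n ≥ 1, the quotient [E*,E*]/([E*,E*]ⁿ·[E*,E₀*]) is a homomorphic image of Λ/nΛ. -/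
/-!
A torsion-free abelian group has unique sums, since its finitely generated subgroups embed in
`ℤⁿ`. So if `u * v = 1` and `u` had several homogeneous components, two distinct pairs of
components of `u` and `v` would each be the only contribution to the degree of their product;
these products are nonzero, so both degrees are `0` and the pairs coincide. Hence every unit of
`E` is homogeneous, and its degree modulo `Γ_T` is a surjection `f : E* → Γ_E/Γ_T` whose kernel
is `E₀*` up to central units, so that `[E*, ker f] ≤ N`.

Modulo `N` the kernel of `f` is central, hence so is every commutator. Then `(a, b) ↦ [a, b]N` is
biadditive, alternating and depends only on `f a` and `f b`, so it factors through
`⋀²(Γ_E/Γ_T)`, and its image generates `[E*, E*]N/N`.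
-/

open scoped commutatorElement

section CentralCommutators

variable {Q : Type*} [Group Q]

theorem commutatorElement_mul_left_of_mem_center {x y z : Q} (hx : ⁅x, z⁆ ∈ Subgroup.center Q)
    (hy : ⁅y, z⁆ ∈ Subgroup.center Q) : ⁅x * y, z⁆ = ⁅x, z⁆ * ⁅y, z⁆ := by
  rw [commutatorElement_mul_left_eq_conj_mul, Subgroup.mem_center_iff.1 hy x,
    mul_inv_cancel_right, Subgroup.mem_center_iff.1 hx]

theorem commutatorElement_mul_right_of_mem_center {x y z : Q}
    (hz : ⁅x, z⁆ ∈ Subgroup.center Q) : ⁅x, y * z⁆ = ⁅x, y⁆ * ⁅x, z⁆ := by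
  rw [commutatorElement_mul_right_eq_mul_conj, mul_assoc _ y, Subgroup.mem_center_iff.1 hz y,
    mul_assoc, mul_inv_cancel_right]

theorem commutatorElement_mul_center_right {x y z : Q} (hz : z ∈ Subgroup.center Q) :
    ⁅x, y * z⁆ = ⁅x, y⁆ := by
  have hxz : ⁅x, z⁆ = 1 :=
    commutatorElement_eq_one_iff_mul_comm.2 (Subgroup.mem_center_iff.1 hz x)
  rw [commutatorElement_mul_right_of_mem_center (hxz ▸ one_mem _), hxz, mul_one]

theorem commutatorElement_mul_center_left {x y z : Q} (hy : y ∈ Subgroup.center Q) :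
    ⁅x * y, z⁆ = ⁅x, z⁆ := by
  rw [← inv_inj, commutatorElement_inv, commutatorElement_inv,
    commutatorElement_mul_center_right hy]

theorem isMulCommutative_commutator_of_le_center (h : commutator Q ≤ Subgroup.center Q) :
    IsMulCommutative (commutator Q) :=
  ⟨⟨fun a b => Subtype.ext (Subgroup.mem_center_iff.1 (h b.2) a)⟩⟩

theorem Subgroup.commutator_top_le_of_forall_exists_mem_center {K L : Subgroup Q}
    (hL : ∀ u ∈ L, ∃ z ∈ Subgroup.center Q, u * z⁻¹ ∈ K) :
    ⁅(⊤ : Subgroup Q), L⁆ ≤ ⁅(⊤ : Subgroup Q), K⁆ := by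
  rw [Subgroup.commutator_le]
  intro a _ u hu
  obtain ⟨z, hz, huz⟩ := hL u hu
  rw [← inv_mul_cancel_right u z, commutatorElement_mul_center_right hz]
  exact Subgroup.commutator_mem_commutator trivial huz

end CentralCommutators

theorem QuotientGroup.image_mk_commutator {G : Type*} [Group G] (N : Subgroup G) [N.Normal] :
    (QuotientGroup.mk : G → G ⧸ N) '' (commutator G : Set G) = commutator (G ⧸ N) := by
  rw [← QuotientGroup.coe_mk', ← Subgroup.coe_map, map_commutator_eq,
    MonoidHom.range_eq_top.2 (QuotientGroup.mk'_surjective N), ← commutator_def]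

section CommutatorPairing

variable {G A : Type*} [Group G] [AddCommGroup A] {f : G →* Multiplicative A}
  {N : Subgroup G} [N.Normal]

theorem QuotientGroup.mk_mem_center_of_map_eq_one (hN : ⁅(⊤ : Subgroup G), f.ker⁆ ≤ N) {k : G}
    (hk : f k = 1) : (k : G ⧸ N) ∈ Subgroup.center (G ⧸ N) := by
  refine Subgroup.mem_center_iff.2 fun q => QuotientGroup.induction_on q fun a => ?_
  rw [← commutatorElement_eq_one_iff_mul_comm, ← QuotientGroup.mk'_apply,
    ← QuotientGroup.mk'_apply, ← map_commutatorElement, QuotientGroup.mk'_apply,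
    QuotientGroup.eq_one_iff]
  exact hN (Subgroup.commutator_mem_commutator (Subgroup.mem_top a) hk)

theorem commutator_quotient_le_center (hN : ⁅(⊤ : Subgroup G), f.ker⁆ ≤ N) :
    commutator (G ⧸ N) ≤ Subgroup.center (G ⧸ N) := by
  rw [commutator_def, Subgroup.commutator_le]
  intro x _ y _
  induction x using QuotientGroup.induction_on with | H a => ?_
  induction y using QuotientGroup.induction_on with | H b => ?_
  rw [← QuotientGroup.mk'_apply, ← QuotientGroup.mk'_apply, ← map_commutatorElement]
  exact QuotientGroup.mk_mem_center_of_map_eq_one hN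
    (by rw [map_commutatorElement, commutatorElement_eq_one_iff_mul_comm, mul_comm])

theorem commutatorElement_mk_congr (hN : ⁅(⊤ : Subgroup G), f.ker⁆ ≤ N) {a a' b b' : G}
    (ha : f a = f a') (hb : f b = f b') :
    ⁅(a : G ⧸ N), (b : G ⧸ N)⁆ = ⁅(a' : G ⧸ N), (b' : G ⧸ N)⁆ := by
  have ha' : (a' : G ⧸ N) = a * (a⁻¹ * a' : G) := by simp
  have hb' : (b' : G ⧸ N) = b * (b⁻¹ * b' : G) := by simp
  rw [ha', hb', commutatorElement_mul_center_left, commutatorElement_mul_center_right] <;>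
    exact QuotientGroup.mk_mem_center_of_map_eq_one hN (by simp [ha, hb])

end CommutatorPairing

def LinearMap.toAlternatingMapFinTwo {R M N : Type*} [CommRing R] [AddCommGroup M]
    [AddCommGroup N] [Module R M] [Module R N] (B : M →ₗ[R] M →ₗ[R] N) (hB : ∀ x, B x x = 0) :
    M [⋀^Fin 2]→ₗ[R] N where
  toFun v := B (v 0) (v 1)
  map_update_add' v i x y := by
    fin_cases i <;> simp
  map_update_smul' v i c x := by
    fin_cases i <;> simp
  map_eq_zero_of_eq' v i j hv hij := by
    fin_cases i <;> fin_cases j <;> simp_all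

theorem exists_monoidHom_exteriorPower_two {A C : Type*} [AddCommGroup A] [CommGroup C]
    (p : A → A → C) (hl : ∀ x x' y, p (x + x') y = p x y * p x' y)
    (hr : ∀ x y y', p x (y + y') = p x y * p x y') (hd : ∀ x, p x x = 1) :
    ∃ φ : Multiplicative (⋀[ℤ]^2 A) →* C,
      ∀ x y, φ (.ofAdd (exteriorPower.ιMulti ℤ 2 ![x, y])) = p x y := by
  let P : A →+ A →+ Additive C :=
    AddMonoidHom.mk' (fun x => AddMonoidHom.mk' (fun y => .ofMul (p x y)) (hr x))
      (fun x x' => AddMonoidHom.ext (hl x x'))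
  let B : A →ₗ[ℤ] A →ₗ[ℤ] Additive C :=
    (addMonoidHomLequivInt ℤ).toLinearMap ∘ₗ P.toIntLinearMap
  let L := exteriorPower.alternatingMapLinearEquiv (B.toAlternatingMapFinTwo hd)
  exact ⟨AddMonoidHom.toMultiplicativeLeft L.toAddMonoidHom, fun x y =>
    congrArg Additive.toMul (exteriorPower.alternatingMapLinearEquiv_apply_ιMulti _ _)⟩

open scoped IsMulCommutative in
theorem exists_monoidHom_exteriorPower_two_eq_commutatorElement {G A : Type*} [Group G]
    [AddCommGroup A] {f : G →* Multiplicative A} (hf : Function.Surjective f) {N : Subgroup G}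
    [N.Normal] (hN : ⁅(⊤ : Subgroup G), f.ker⁆ ≤ N) :
    ∃ φ : Multiplicative (⋀[ℤ]^2 A) →* G ⧸ N, (∀ x, φ x ∈ commutator (G ⧸ N)) ∧
      ∀ a b : G, φ (.ofAdd (exteriorPower.ιMulti ℤ 2 ![(f a).toAdd, (f b).toAdd])) =
        ⁅(a : G ⧸ N), (b : G ⧸ N)⁆ := by
  have hcent : ∀ x y : G ⧸ N, ⁅x, y⁆ ∈ Subgroup.center (G ⧸ N) := fun x y =>
    commutator_quotient_le_center hN (Subgroup.commutator_mem_commutator trivial trivial)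
  -- with the scoped instance, this makes `commutator (G ⧸ N)` a `CommGroup`
  have := isMulCommutative_commutator_of_le_center (commutator_quotient_le_center hN)
  have hsurj (x : A) : ∃ a, (f a).toAdd = x := (hf (.ofAdd x)).imp fun a h => by simp [h]
  let p : A → A → commutator (G ⧸ N) := fun x y =>
    ⟨⁅((hsurj x).choose : G ⧸ N), ((hsurj y).choose : G ⧸ N)⁆,
      Subgroup.commutator_mem_commutator trivial trivial⟩
  have hp (a b : G) : (p (f a).toAdd (f b).toAdd : G ⧸ N) = ⁅(a : G ⧸ N), (b : G ⧸ N)⁆ :=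
    commutatorElement_mk_congr hN (congrArg Multiplicative.ofAdd (hsurj _).choose_spec)
      (congrArg Multiplicative.ofAdd (hsurj _).choose_spec)
  have hl (x x' y : A) : p (x + x') y = p x y * p x' y := by
    obtain ⟨a, rfl⟩ := hsurj x; obtain ⟨a', rfl⟩ := hsurj x'; obtain ⟨b, rfl⟩ := hsurj y
    ext
    rw [← toAdd_mul, ← map_mul, Subgroup.coe_mul, hp, hp, hp, QuotientGroup.mk_mul,
      commutatorElement_mul_left_of_mem_center (hcent _ _) (hcent _ _)]
  have hr (x y y' : A) : p x (y + y') = p x y * p x y' := by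
    obtain ⟨a, rfl⟩ := hsurj x; obtain ⟨b, rfl⟩ := hsurj y; obtain ⟨b', rfl⟩ := hsurj y'
    ext
    rw [← toAdd_mul, ← map_mul, Subgroup.coe_mul, hp, hp, hp, QuotientGroup.mk_mul,
      commutatorElement_mul_right_of_mem_center (hcent _ _)]
  obtain ⟨φ, hφ⟩ := exists_monoidHom_exteriorPower_two p hl hr
    fun x => Subtype.ext (commutatorElement_self _)
  exact ⟨(commutator (G ⧸ N)).subtype.comp φ, fun x => (φ x).2, fun a b => by simp [hφ, hp]⟩

theorem exists_monoidHom_exteriorPower_two_range_eq {G A : Type*} [Group G] [AddCommGroup A]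
    {f : G →* Multiplicative A} (hf : Function.Surjective f) {N : Subgroup G} [N.Normal]
    (hN : ⁅(⊤ : Subgroup G), f.ker⁆ ≤ N) :
    ∃ φ : Multiplicative (⋀[ℤ]^2 A) →* G ⧸ N,
      Set.range φ = (QuotientGroup.mk : G → G ⧸ N) '' (commutator G : Set G) := by
  obtain ⟨φ, hφ_mem, hφ⟩ := exists_monoidHom_exteriorPower_two_eq_commutatorElement hf hN
  have hle : Subgroup.closure (commutatorSet (G ⧸ N)) ≤ φ.range := by
    rw [Subgroup.closure_le]
    rintro _ ⟨x, y, rfl⟩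
    induction x using QuotientGroup.induction_on with | H a => ?_
    induction y using QuotientGroup.induction_on with | H b => ?_
    exact ⟨_, hφ a b⟩
  refine ⟨φ, ?_⟩
  rw [QuotientGroup.image_mk_commutator]
  exact subset_antisymm (Set.range_subset_iff.2 hφ_mem)
    fun x hx => hle (commutator_eq_closure (G ⧸ N) ▸ hx)

instance IsAddTorsionFree.to_uniqueSums {Γ : Type*} [AddCommGroup Γ]
    [IsAddTorsionFree Γ] : UniqueSums Γ where
  uniqueAdd_of_nonempty {A B} hA hB := by
    classical
    let S := AddSubgroup.closure ((A ∪ B : Finset Γ) : Set Γ)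
    have hAS : ∀ a ∈ A, a ∈ S := fun a ha => AddSubgroup.subset_closure (by simp [ha])
    have hBS : ∀ b ∈ B, b ∈ S := fun b hb => AddSubgroup.subset_closure (by simp [hb])
    obtain ⟨a, ha, b, hb, hu⟩ := UniqueSums.uniqueAdd_of_nonempty
      (A := A.subtype (· ∈ S)) (B := B.subtype (· ∈ S))
      (by obtain ⟨a, ha⟩ := hA; exact ⟨⟨a, hAS a ha⟩, by simpa using ha⟩)
      (by obtain ⟨b, hb⟩ := hB; exact ⟨⟨b, hBS b hb⟩, by simpa using hb⟩)
    refine ⟨a, by simpa using ha, b, by simpa using hb, fun a₁ b₁ ha₁ hb₁ he => ?_⟩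
    simpa [Subtype.ext_iff] using @hu ⟨a₁, hAS a₁ ha₁⟩ ⟨b₁, hBS b₁ hb₁⟩
      (by simpa using ha₁) (by simpa using hb₁) (Subtype.ext he)

section GradedRing

variable {ι R σ : Type*} [DecidableEq ι] [Semiring R] [SetLike σ R] [AddSubmonoidClass σ R]

open DirectSum Finset

theorem DirectSum.coe_decompose_mul_add_of_uniqueAdd_s16 [AddMonoid ι] (𝒜 : ι → σ) [GradedRing 𝒜]
    [∀ (i) (a : 𝒜 i), Decidable (a ≠ 0)] {x y : R} {i j : ι}
    (hi : i ∈ (decompose 𝒜 x).support) (hj : j ∈ (decompose 𝒜 y).support)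
    (h : UniqueAdd (decompose 𝒜 x).support (decompose 𝒜 y).support i j) :
    (decompose 𝒜 (x * y) (i + j) : R) = decompose 𝒜 x i * decompose 𝒜 y j := by
  rw [decompose_mul, coe_mul_apply, Finset.sum_eq_single_of_mem (i, j) (by simp [hi, hj])]
  rintro ⟨i', j'⟩ hij hne
  simp only [Finset.mem_filter, Finset.mem_product] at hij
  exact absurd (Prod.ext_iff.2 (h hij.1.1 hij.1.2 hij.2)) hne

theorem SetLike.isHomogeneousElem_of_mul_eq_one [AddCancelCommMonoid ι] [TwoUniqueSums ι]
    (𝒜 : ι → σ) [GradedRing 𝒜]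
    (h𝒜 : ∀ {i j : ι} {a b : R}, a ∈ 𝒜 i → b ∈ 𝒜 j → a * b = 0 → a = 0 ∨ b = 0)
    {x y : R} (hxy : x * y = 1) : SetLike.IsHomogeneousElem 𝒜 x := by
  classical
  set S := (decompose 𝒜 x).support
  set T := (decompose 𝒜 y).support
  have hsum : ∀ p ∈ S ×ˢ T, UniqueAdd S T p.1 p.2 → p.1 + p.2 = 0 := by
    rintro ⟨i, j⟩ hp hu
    rw [Finset.mem_product] at hp
    by_contra hne
    have := DirectSum.coe_decompose_mul_add_of_uniqueAdd_s16 𝒜 hp.1 hp.2 hu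
    rw [hxy, decompose_of_mem_ne 𝒜 (SetLike.one_mem_graded 𝒜) (Ne.symm hne)] at this
    rcases h𝒜 (decompose 𝒜 x i).2 (decompose 𝒜 y j).2 this.symm with h | h
    · exact DFinsupp.mem_support_iff.1 hp.1 (Subtype.ext h)
    · exact DFinsupp.mem_support_iff.1 hp.2 (Subtype.ext h)
  have hcard : #S * #T ≤ 1 := by
    by_contra! hlt
    obtain ⟨p, hp, q, hq, hne, hup, huq⟩ := TwoUniqueSums.uniqueAdd_of_one_lt_card hlt
    obtain ⟨hq₁, hq₂⟩ := Finset.mem_product.1 hq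
    exact hne (Prod.ext_iff.2 (hup hq₁ hq₂ ((hsum q hq huq).trans (hsum p hp hup).symm))).symm
  have hS : #S ≤ 1 := by
    rcases (#T).eq_zero_or_pos with hT | hT
    · have hy : y = 0 := by
        simpa using congrArg (decompose 𝒜).symm (DFinsupp.support_eq_empty.1 (card_eq_zero.1 hT))
      have : Subsingleton R := subsingleton_of_zero_eq_one (by rw [← hxy, hy, mul_zero])
      simp [S, Subsingleton.elim x 0]
    · exact (Nat.le_mul_of_pos_right _ hT).trans hcard
  obtain ⟨i, hi⟩ := Finset.card_le_one_iff_subset_singleton.1 hS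
  refine ⟨i, ?_⟩
  rw [← sum_support_decompose 𝒜 x]
  exact sum_mem fun j hj => Finset.mem_singleton.1 (hi hj) ▸ (decompose 𝒜 x j).2

end GradedRing

section UnitsDegree

variable {ι R σ : Type*} [DecidableEq ι] [Semiring R] [Nontrivial R] [SetLike σ R]
  [AddSubmonoidClass σ R]

noncomputable def unitsDegree [AddMonoid ι] (𝒜 : ι → σ) [GradedRing 𝒜]
    (h𝒜 : ∀ u : Rˣ, SetLike.IsHomogeneousElem 𝒜 (u : R)) : Rˣ →* Multiplicative ι where
  toFun u := .ofAdd (h𝒜 u).choose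
  map_one' := congrArg _ <| DirectSum.degree_eq_of_mem_mem 𝒜 (h𝒜 1).choose_spec
    (SetLike.one_mem_graded 𝒜) one_ne_zero
  map_mul' u v := congrArg _ <| DirectSum.degree_eq_of_mem_mem 𝒜 (h𝒜 (u * v)).choose_spec
    (SetLike.mul_mem_graded (h𝒜 u).choose_spec (h𝒜 v).choose_spec) (u * v).ne_zero

section AddMonoid

variable [AddMonoid ι] (𝒜 : ι → σ) [GradedRing 𝒜]
  (h𝒜 : ∀ u : Rˣ, SetLike.IsHomogeneousElem 𝒜 (u : R))

theorem coe_mem_unitsDegree (u : Rˣ) : (u : R) ∈ 𝒜 (unitsDegree 𝒜 h𝒜 u).toAdd :=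
  (h𝒜 u).choose_spec

theorem unitsDegree_eq_of_mem {u : Rˣ} {i : ι} (hu : (u : R) ∈ 𝒜 i) :
    unitsDegree 𝒜 h𝒜 u = .ofAdd i :=
  congrArg Multiplicative.ofAdd <| DirectSum.degree_eq_of_mem_mem 𝒜 (h𝒜 u).choose_spec hu u.ne_zero

end AddMonoid

variable [AddCommGroup ι] (𝒜 : ι → σ) [GradedRing 𝒜]
  (h𝒜 : ∀ u : Rˣ, SetLike.IsHomogeneousElem 𝒜 (u : R)) (ΓT : AddSubgroup ι) {ΓE : AddSubgroup ι}
  (hΓE : ∀ u : Rˣ, (unitsDegree 𝒜 h𝒜 u).toAdd ∈ ΓE)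

noncomputable def unitsDegreeMod : Rˣ →* Multiplicative (ΓE ⧸ ΓT.addSubgroupOf ΓE) :=
  AddMonoidHom.toMultiplicativeRight <| (QuotientAddGroup.mk' _).comp <|
    (AddMonoidHom.toMultiplicativeRight.symm (unitsDegree 𝒜 h𝒜)).codRestrict ΓE hΓE

theorem unitsDegreeMod_apply (u : Rˣ) :
    unitsDegreeMod 𝒜 h𝒜 ΓT hΓE u = .ofAdd ↑(⟨(unitsDegree 𝒜 h𝒜 u).toAdd, hΓE u⟩ : ΓE) :=
  rfl

theorem unitsDegreeMod_surjective (hdiv : ∀ (i : ι) (x : R), x ∈ 𝒜 i → x ≠ 0 → IsUnit x)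
    (hgrade : ∀ i ∈ ΓE, ∃ x : R, x ≠ 0 ∧ x ∈ 𝒜 i) :
    Function.Surjective (unitsDegreeMod 𝒜 h𝒜 ΓT hΓE) := by
  intro y
  obtain ⟨⟨i, hi⟩, hy⟩ := QuotientAddGroup.mk_surjective y.toAdd
  obtain ⟨x, hx0, hx⟩ := hgrade i hi
  obtain ⟨u, rfl⟩ := hdiv i x hx hx0
  refine ⟨u, ?_⟩
  rw [unitsDegreeMod_apply, ← ofAdd_toAdd y, ← hy]
  congr
  simp [unitsDegree_eq_of_mem 𝒜 h𝒜 hx]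

theorem unitsDegreeMod_eq_one_iff {u : Rˣ} :
    unitsDegreeMod 𝒜 h𝒜 ΓT hΓE u = 1 ↔ (unitsDegree 𝒜 h𝒜 u).toAdd ∈ ΓT := by
  rw [unitsDegreeMod_apply, ← ofAdd_zero, EmbeddingLike.apply_eq_iff_eq,
    QuotientAddGroup.eq_zero_iff, AddSubgroup.mem_addSubgroupOf]

theorem commutator_top_ker_unitsDegreeMod_le
    (hdiv : ∀ (i : ι) (x : R), x ∈ 𝒜 i → x ≠ 0 → IsUnit x)
    (hΓT : ∀ i ∈ ΓT, ∃ x : R, x ≠ 0 ∧ x ∈ 𝒜 i ∧ x ∈ Set.center R) {K : Subgroup Rˣ}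
    (hK : ∀ u : Rˣ, (u : R) ∈ 𝒜 0 → u ∈ K) :
    ⁅(⊤ : Subgroup Rˣ), (unitsDegreeMod 𝒜 h𝒜 ΓT hΓE).ker⁆ ≤ ⁅(⊤ : Subgroup Rˣ), K⁆ := by
  refine Subgroup.commutator_top_le_of_forall_exists_mem_center fun u hu => ?_
  obtain ⟨x, hx0, hx, hxc⟩ := hΓT _ ((unitsDegreeMod_eq_one_iff 𝒜 h𝒜 ΓT hΓE).1 hu)
  obtain ⟨z, rfl⟩ := hdiv _ x hx hx0
  refine ⟨z, Set.subset_center_units hxc, hK _ ?_⟩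
  have := coe_mem_unitsDegree 𝒜 h𝒜 (u * z⁻¹)
  rwa [map_mul, map_inv, unitsDegree_eq_of_mem 𝒜 h𝒜 hx, ofAdd_toAdd, mul_inv_cancel,
    toAdd_one] at this

end UnitsDegree

theorem exterior_square_surjects_onto_commutator_quotient_general {Γ E : Type*}
    [AddCommGroup Γ] [DecidableEq Γ] [Ring E] [Nontrivial E]
    (𝒜 : Γ → AddSubgroup E) [GradedRing 𝒜]
    (hdiv : ∀ (γ : Γ) (x : E), x ∈ 𝒜 γ → x ≠ 0 → IsUnit x)
    -- `Γ` is torsion-free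
    (htf : ∀ (γ : Γ) (m : ℕ), m ≠ 0 → m • γ = 0 → γ = 0)
    -- the grade groups `Γ_E` and `Γ_T` (`T = Z(E)`)
    (GammaE GammaT : AddSubgroup Γ)
    (hGE : ∀ γ : Γ, γ ∈ GammaE ↔ ∃ x : E, x ≠ 0 ∧ x ∈ 𝒜 γ)
    (hGT : ∀ γ : Γ, γ ∈ GammaT ↔ ∃ x : E, x ≠ 0 ∧ x ∈ 𝒜 γ ∧ x ∈ Set.center E)
    -- `E₀*`, the group of units of the degree-zero component
    (E0u : Subgroup Eˣ) (hE0u : ∀ u : Eˣ, u ∈ E0u ↔ u.val ∈ 𝒜 (0 : Γ))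
    -- `N = [E*, E₀*]`
    (N : Subgroup Eˣ) [N.Normal] (hN : N = ⁅(⊤ : Subgroup Eˣ), E0u⁆) :
    -- there is a group homomorphism from `Λ` onto `[E*, E*]/[E*, E₀*] ⊆ Eˣ/N`
    (∃ φ : Multiplicative ↥(⋀[ℤ]^2 (↥GammaE ⧸ GammaT.addSubgroupOf GammaE)) →*
        Eˣ ⧸ N,
      Set.range φ = (QuotientGroup.mk : Eˣ → Eˣ ⧸ N) '' (commutator Eˣ : Set Eˣ)) ∧
    -- in particular the quotient `[E*, E*]/[E*, E₀*]` is abelian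
    (∀ a b : Eˣ ⧸ N,
      a ∈ (QuotientGroup.mk : Eˣ → Eˣ ⧸ N) '' (commutator Eˣ : Set Eˣ) →
      b ∈ (QuotientGroup.mk : Eˣ → Eˣ ⧸ N) '' (commutator Eˣ : Set Eˣ) →
      a * b = b * a) ∧
    -- consequently `[E*, E*]/([E*, E*]ⁿ · [E*, E₀*])` is a homomorphic image of `Λ/nΛ`
    (∀ nn : ℕ, 0 < nn → ∀ (Nn : Subgroup Eˣ) [Nn.Normal],
      Nn = Subgroup.closure
          ((fun y : Eˣ => y ^ nn) '' (commutator Eˣ : Set Eˣ)) ⊔ N →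
      ∃ ψ : Multiplicative ↥(⋀[ℤ]^2 (↥GammaE ⧸ GammaT.addSubgroupOf GammaE)) →*
          Eˣ ⧸ Nn,
        Set.range ψ = (QuotientGroup.mk : Eˣ → Eˣ ⧸ Nn) '' (commutator Eˣ : Set Eˣ) ∧
        ∀ x, ψ (Multiplicative.ofAdd (nn • x)) = 1) := by
  have : IsAddTorsionFree Γ := ⟨fun n hn a b hab =>
    sub_eq_zero.1 (htf _ n hn (by rw [nsmul_sub]; exact sub_eq_zero.2 hab))⟩
  have := UniqueSums.toTwoUniqueSums_of_addGroup (G := Γ)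
  have hunit (u : Eˣ) : SetLike.IsHomogeneousElem 𝒜 (u : E) :=
    SetLike.isHomogeneousElem_of_mul_eq_one 𝒜 (fun {i _ a _} ha _ hab => or_iff_not_imp_left.2
      fun ha0 => (hdiv i a ha ha0).mul_right_eq_zero.1 hab) u.mul_inv
  have hdegE (u : Eˣ) : (unitsDegree 𝒜 hunit u).toAdd ∈ GammaE :=
    (hGE _).2 ⟨u, u.ne_zero, coe_mem_unitsDegree 𝒜 hunit u⟩
  have hf := unitsDegreeMod_surjective 𝒜 hunit GammaT hdegE hdiv fun γ => (hGE γ).1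
  have hker := hN ▸ commutator_top_ker_unitsDegreeMod_le 𝒜 hunit GammaT hdegE hdiv
    (fun γ => (hGT γ).1) (K := E0u) fun u => (hE0u u).2
  obtain ⟨φ, hφ⟩ := exists_monoidHom_exteriorPower_two_range_eq hf hker
  refine ⟨⟨φ, hφ⟩, fun a b ha hb => ?_, fun n _ Nn _ hNn => ?_⟩
  · rw [← hφ] at ha hb
    obtain ⟨x, rfl⟩ := ha
    obtain ⟨y, rfl⟩ := hb
    rw [← map_mul, mul_comm, map_mul]
  · obtain ⟨ψ, hψ⟩ := exists_monoidHom_exteriorPower_two_range_eq hf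
      (hker.trans (hNn ▸ le_sup_right))
    refine ⟨ψ, hψ, fun x => ?_⟩
    obtain ⟨c, hc, hcx⟩ : ψ (.ofAdd x) ∈ (QuotientGroup.mk : Eˣ → Eˣ ⧸ Nn) '' commutator Eˣ :=
      hψ ▸ Set.mem_range_self _
    rw [ofAdd_nsmul, map_pow, ← hcx, ← QuotientGroup.mk_pow, QuotientGroup.eq_one_iff, hNn]
    exact Subgroup.mem_sup_left (Subgroup.subset_closure ⟨c, hc, rfl⟩)

/-- let `Γ` be a torsion-free abelian group, `E` a `Γ`-graded
division algebra with center `T = Z(E)`, and `Λ = (Γ_E/Γ_T) ∧ (Γ_E/Γ_T)` the exterior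
square over `ℤ` of `Γ_E/Γ_T`.  Then there is a surjective group homomorphism from `Λ`
onto `[E*, E*]/[E*, E₀*]` (in particular this quotient is abelian); consequently, for
every `n ≥ 1`, `[E*, E*]/([E*, E*]ⁿ · [E*, E₀*])` is a homomorphic image of `Λ/nΛ`. -/
theorem exterior_square_surjects_onto_commutator_quotient {Γ E : Type*}
    [AddCommGroup Γ] [DecidableEq Γ] [Ring E] [Nontrivial E]
    (𝒜 : Γ → AddSubgroup E) [GradedRing 𝒜]
    (hdiv : ∀ (γ : Γ) (x : E), x ∈ 𝒜 γ → x ≠ 0 → IsUnit x)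
    -- `Γ` is torsion-free
    (htf : ∀ (γ : Γ) (m : ℕ), m ≠ 0 → m • γ = 0 → γ = 0)
    -- `E` is a graded division *algebra*: finite-dimensional over its center
    (hfin : Module.Finite (Subring.center E) E)
    -- the grade groups `Γ_E` and `Γ_T` (`T = Z(E)`)
    (GammaE GammaT : AddSubgroup Γ)
    (hGE : ∀ γ : Γ, γ ∈ GammaE ↔ ∃ x : E, x ≠ 0 ∧ x ∈ 𝒜 γ)
    (hGT : ∀ γ : Γ, γ ∈ GammaT ↔ ∃ x : E, x ≠ 0 ∧ x ∈ 𝒜 γ ∧ x ∈ Set.center E)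
    (hTE : GammaT ≤ GammaE)
    -- `E₀*`, the group of units of the degree-zero component
    (E0u : Subgroup Eˣ) (hE0u : ∀ u : Eˣ, u ∈ E0u ↔ u.val ∈ 𝒜 (0 : Γ))
    -- `N = [E*, E₀*]`
    (N : Subgroup Eˣ) [N.Normal] (hN : N = ⁅(⊤ : Subgroup Eˣ), E0u⁆) :
    -- there is a group homomorphism from `Λ` onto `[E*, E*]/[E*, E₀*] ⊆ Eˣ/N`
    (∃ φ : Multiplicative ↥(⋀[ℤ]^2 (↥GammaE ⧸ GammaT.addSubgroupOf GammaE)) →*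
        Eˣ ⧸ N,
      Set.range φ = (QuotientGroup.mk : Eˣ → Eˣ ⧸ N) '' (commutator Eˣ : Set Eˣ)) ∧
    -- in particular the quotient `[E*, E*]/[E*, E₀*]` is abelian
    (∀ a b : Eˣ ⧸ N,
      a ∈ (QuotientGroup.mk : Eˣ → Eˣ ⧸ N) '' (commutator Eˣ : Set Eˣ) →
      b ∈ (QuotientGroup.mk : Eˣ → Eˣ ⧸ N) '' (commutator Eˣ : Set Eˣ) →
      a * b = b * a) ∧
    -- consequently `[E*, E*]/([E*, E*]ⁿ · [E*, E₀*])` is a homomorphic image of `Λ/nΛ`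
    (∀ nn : ℕ, 0 < nn → ∀ (Nn : Subgroup Eˣ) [Nn.Normal],
      Nn = Subgroup.closure
          ((fun y : Eˣ => y ^ nn) '' (commutator Eˣ : Set Eˣ)) ⊔ N →
      ∃ ψ : Multiplicative ↥(⋀[ℤ]^2 (↥GammaE ⧸ GammaT.addSubgroupOf GammaE)) →*
          Eˣ ⧸ Nn,
        Set.range ψ = (QuotientGroup.mk : Eˣ → Eˣ ⧸ Nn) '' (commutator Eˣ : Set Eˣ) ∧
        ∀ x, ψ (Multiplicative.ofAdd (nn • x)) = 1) :=
  exterior_square_surjects_onto_commutator_quotient_general 𝒜 hdiv htf GammaE GammaT hGE hGT E0u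
    hE0u N hN
end
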